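/- arXiv:2303.06848 — 5 statements merged into one kernel-verified Lean document; each statement's English description precedes it below -/
import Mathlib

section
/- Any 2-input-2-output no-signaling correlation satisfying Hardy's conditions — h(0,0|0,0) > 0, h(0,1|0,1) = 0, h(1,0|1,0) = 0, h(0,0|1,1) = 0 — cannot be written as a local hidden variable (Bell-local) correlation. -/
/-- A 2-input-2-output no-signaling correlation satisfying Hardy's
conditions cannot be written as a Bell-local (finite hidden variable) correlation. -/
theorem hardy_correlation_not_bell_local
    (h : Fin 2 → Fin 2 → Fin 2 → Fin 2 → ℝ)
    (hpos : ∀ a b x y, 0 ≤ h a b x y)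
    (hnorm : ∀ x y, ∑ a, ∑ b, h a b x y = 1)
    (hnsA : ∀ a x y y', ∑ b, h a b x y = ∑ b, h a b x y')
    (hnsB : ∀ b y x x', ∑ a, h a b x y = ∑ a, h a b x' y)
    (hardy1 : 0 < h 0 0 0 0)
    (hardy2 : h 0 1 0 1 = 0)
    (hardy3 : h 1 0 1 0 = 0)
    (hardy4 : h 0 0 1 1 = 0) :
    ¬ ∃ (n : ℕ) (μ : Fin n → ℝ)
        (pA : Fin 2 → Fin 2 → Fin n → ℝ) (pB : Fin 2 → Fin 2 → Fin n → ℝ),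
      (∀ l, 0 ≤ μ l) ∧ (∑ l, μ l = 1) ∧
      (∀ a x l, 0 ≤ pA a x l) ∧ (∀ x l, ∑ a, pA a x l = 1) ∧
      (∀ b y l, 0 ≤ pB b y l) ∧ (∀ y l, ∑ b, pB b y l = 1) ∧
      (∀ a b x y, h a b x y = ∑ l, μ l * pA a x l * pB b y l) := by
  rintro ⟨n, μ, pA, pB, hμ, hμ1, hApos, hAsum, hBpos, hBsum, hrep⟩
  have term_nonneg : ∀ (a b x y : Fin 2) (l : Fin n),
      0 ≤ μ l * pA a x l * pB b y l := fun a b x y l =>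
    mul_nonneg (mul_nonneg (hμ l) (hApos a x l)) (hBpos b y l)
  -- get l with positive term from hardy1
  have h1 : 0 < ∑ l, μ l * pA 0 0 l * pB 0 0 l := by rw [← hrep]; exact hardy1
  obtain ⟨l, -, hl⟩ : ∃ l ∈ Finset.univ, 0 < μ l * pA 0 0 l * pB 0 0 l := by
    by_contra hc
    push_neg at hc
    have : ∑ l, μ l * pA 0 0 l * pB 0 0 l ≤ 0 :=
      Finset.sum_nonpos fun l hm => hc l hm
    linarith
  have hμl : 0 < μ l := by
    by_contra hc
    push_neg at hc
    nlinarith [hl, mul_nonneg (hApos 0 0 l) (hBpos 0 0 l), hc]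
  have hA00 : 0 < pA 0 0 l := by
    by_contra hc
    push_neg at hc
    have : pA 0 0 l = 0 := le_antisymm hc (hApos 0 0 l)
    rw [this] at hl; simp at hl
  have hB00 : 0 < pB 0 0 l := by
    by_contra hc
    push_neg at hc
    have : pB 0 0 l = 0 := le_antisymm hc (hBpos 0 0 l)
    rw [this] at hl; simp at hl
  have hzero : ∀ (a b x y : Fin 2), h a b x y = 0 →
      μ l * pA a x l * pB b y l = 0 := by
    intro a b x y hz
    have := hrep a b x y
    rw [hz] at this
    have h0 := (Finset.sum_eq_zero_iff_of_nonneg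
      (fun m _ => term_nonneg a b x y m)).mp this.symm
    exact h0 l (Finset.mem_univ l)
  have h3 := hzero 1 0 1 0 hardy3
  have h2 := hzero 0 1 0 1 hardy2
  have hA11 : pA 1 1 l = 0 := by
    rcases mul_eq_zero.mp h3 with h' | h'
    · rcases mul_eq_zero.mp h' with h'' | h''
      · linarith
      · exact h''
    · linarith
  have hB11 : pB 1 1 l = 0 := by
    rcases mul_eq_zero.mp h2 with h' | h'
    · rcases mul_eq_zero.mp h' with h'' | h''
      · linarith
      · nlinarith
    · exact h'
  have hAsum1 := hAsum 1 l
  have hBsum1 := hBsum 1 l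
  rw [Fin.sum_univ_two] at hAsum1 hBsum1
  have hA01 : pA 0 1 l = 1 := by linarith
  have hB01 : pB 0 1 l = 1 := by linarith
  have h4 := hzero 0 0 1 1 hardy4
  rw [hA01, hB01] at h4
  simp at h4
  linarith
end

section
/- If a Bell-local correlation h over a finite hidden-variable space satisfies h(0,1|0,1) = 0, h(1,0|1,0) = 0, and h(0,0|1,1) = 0, then h(0,0|0,0) = 0. -/
/-- A Bell-local correlation over a finite hidden-variable space
satisfying the three Hardy zero conditions must have h(0,0|0,0) = 0. -/
theorem bell_local_hardy_zeros_force_zero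
    (n : ℕ) (μ : Fin n → ℝ)
    (pA : Fin 2 → Fin 2 → Fin n → ℝ) (pB : Fin 2 → Fin 2 → Fin n → ℝ)
    (hμ : ∀ l, 0 ≤ μ l) (hμ1 : ∑ l, μ l = 1)
    (hpA : ∀ a x l, 0 ≤ pA a x l) (hpA1 : ∀ x l, ∑ a, pA a x l = 1)
    (hpB : ∀ b y l, 0 ≤ pB b y l) (hpB1 : ∀ y l, ∑ b, pB b y l = 1)
    (h : Fin 2 → Fin 2 → Fin 2 → Fin 2 → ℝ)
    (hlocal : ∀ a b x y, h a b x y = ∑ l, μ l * pA a x l * pB b y l)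
    (h2 : h 0 1 0 1 = 0) (h3 : h 1 0 1 0 = 0) (h4 : h 0 0 1 1 = 0) :
    h 0 0 0 0 = 0 := by
  have key : ∀ (a b x y : Fin 2), h a b x y = 0 →
      ∀ l, μ l * pA a x l * pB b y l = 0 := by
    intro a b x y hz l
    rw [hlocal] at hz
    have := (Finset.sum_eq_zero_iff_of_nonneg (fun l _ =>
      mul_nonneg (mul_nonneg (hμ l) (hpA a x l)) (hpB b y l))).mp hz
    exact this l (Finset.mem_univ l)
  have t2 := key 0 1 0 1 h2
  have t3 := key 1 0 1 0 h3
  have t4 := key 0 0 1 1 h4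
  rw [hlocal]
  apply Finset.sum_eq_zero
  intro l _
  by_contra hne
  have hμl : 0 < μ l := lt_of_le_of_ne (hμ l) (by intro h0; rw [← h0] at hne; simp at hne)
  have hA00 : 0 < pA 0 0 l := lt_of_le_of_ne (hpA 0 0 l) (by rintro h'; rw [← h'] at hne; simp at hne)
  have hB00 : 0 < pB 0 0 l := lt_of_le_of_ne (hpB 0 0 l) (by rintro h'; rw [← h'] at hne; simp at hne)
  have hB11 : pB 1 1 l = 0 := by
    rcases mul_eq_zero.mp (t2 l) with h' | h'
    · rcases mul_eq_zero.mp h' with h'' | h''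
      · exact absurd h'' hμl.ne'
      · exact absurd h'' hA00.ne'
    · exact h'
  have hA11 : pA 1 1 l = 0 := by
    rcases mul_eq_zero.mp (t3 l) with h' | h'
    · rcases mul_eq_zero.mp h' with h'' | h''
      · exact absurd h'' hμl.ne'
      · exact h''
    · exact absurd h' hB00.ne'
  have hsA := hpA1 1 l
  have hsB := hpB1 1 l
  rw [Fin.sum_univ_two] at hsA hsB
  have hA01 : pA 0 1 l = 1 := by linarith
  have hB01 : pB 0 1 l = 1 := by linarith
  have := t4 l
  rw [hA01, hB01] at this
  simp at this
  exact hμl.ne' this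
end

section
/- For the Distributed Mine-Hunting payoff matrix G (with G(1,1)=-1, G(1,2)=0, G(1,3)=0, G(3,1)=+1, G(3,2)=0, G(2,2)=0, G(2,4)=0, G(4,3)=0, G(4,4)=0, and all other entries forbidden), every deterministic strategy realizable with 1 classical bit of communication either has nonzero probability on a forbidden entry or has expected payoff exactly 0; hence every such deterministic strategy avoiding forbidden entries has expected payoff ≤ 0. -/
/-- Deterministic 1-bit strategy matrix: s m z = 1 if D (E m) = z, else 0.
Inputs/outputs indexed by Fin 4 (index i ↔ label i+1). -/
def detStrategy (E : Fin 4 → Fin 2) (D : Fin 2 → Fin 4) : Fin 4 → Fin 4 → ℝ :=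
  fun m z => if D (E m) = z then 1 else 0

/-- Forbidden entries of the DMH game (0-indexed): {(1,4),(2,1),(2,3),(3,3),(3,4),(4,1),(4,2)}. -/
def dmhForbidden : Finset (Fin 4 × Fin 4) :=
  {(0,3), (1,0), (1,2), (2,2), (2,3), (3,0), (3,1)}

/-- DMH payoff matrix on allowed entries: G(1,1) = -1, G(3,1) = +1, other allowed entries 0. -/
def dmhG : Fin 4 → Fin 4 → ℝ :=
  fun m z => if m = 0 ∧ z = 0 then -1 else if m = 2 ∧ z = 0 then 1 else 0

/-- Expected payoff of a strategy (inputs uniform). -/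
noncomputable def dmhPayoff (s : Fin 4 → Fin 4 → ℝ) : ℝ :=
  (1/4) * ∑ m, ∑ z, dmhG m z * s m z

lemma dmh_pay (E : Fin 4 → Fin 2) (D : Fin 2 → Fin 4) :
    dmhPayoff (detStrategy E D) =
      (1/4) * ((if D (E 2) = 0 then (1:ℝ) else 0) - (if D (E 0) = 0 then (1:ℝ) else 0)) := by
  simp [dmhPayoff, detStrategy, dmhG, Fin.sum_univ_four]
  split_ifs <;> ring

lemma dmh_forb (E : Fin 4 → Fin 2) (D : Fin 2 → Fin 4)
    (h : ∀ p ∈ dmhForbidden, detStrategy E D p.1 p.2 = 0) :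
    D (E 0) ≠ 3 ∧ D (E 1) ≠ 0 ∧ D (E 1) ≠ 2 ∧ D (E 2) ≠ 2 ∧ D (E 2) ≠ 3 ∧
      D (E 3) ≠ 0 ∧ D (E 3) ≠ 1 := by
  simp [dmhForbidden, detStrategy] at h
  tauto

lemma dmh_fin2_eq (a b c : Fin 2) (h1 : a ≠ c) (h2 : b ≠ c) : a = b := by omega

lemma dmh_fin4_is3 (x : Fin 4) (h0 : x ≠ 0) (h1 : x ≠ 1) (h2 : x ≠ 2) : x = 3 := by omega

lemma dmh_key (E : Fin 4 → Fin 2) (D : Fin 2 → Fin 4)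
    (h : ∀ p ∈ dmhForbidden, detStrategy E D p.1 p.2 = 0) :
    dmhPayoff (detStrategy E D) = 0 := by
  obtain ⟨h03, h10, h12, h22, h23, h30, h31⟩ := dmh_forb E D h
  rw [dmh_pay]
  have hiff : D (E 2) = 0 ↔ D (E 0) = 0 := by
    constructor
    · intro h2
      have n1 : E 1 ≠ E 2 := fun he => h10 (he ▸ h2)
      have n3 : E 3 ≠ E 2 := fun he => h30 (he ▸ h2)
      have e13 : E 1 = E 3 := dmh_fin2_eq _ _ _ n1 n3
      have d3 : D (E 1) = 3 := dmh_fin4_is3 _ h10 (e13 ▸ h31) h12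
      have n01 : E 0 ≠ E 1 := fun he => h03 (he ▸ d3)
      have e02 : E 0 = E 2 := dmh_fin2_eq _ _ _ n01 (Ne.symm n1)
      rw [e02]; exact h2
    · intro h0
      have n1 : E 1 ≠ E 0 := fun he => h10 (he ▸ h0)
      have n3 : E 3 ≠ E 0 := fun he => h30 (he ▸ h0)
      have e13 : E 1 = E 3 := dmh_fin2_eq _ _ _ n1 n3
      have d3 : D (E 1) = 3 := dmh_fin4_is3 _ h10 (e13 ▸ h31) h12
      have n21 : E 2 ≠ E 1 := fun he => h23 (he ▸ d3)
      have e20 : E 2 = E 0 := dmh_fin2_eq _ _ _ n21 (Ne.symm n1)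
      rw [e20]; exact h0
  rw [if_congr hiff rfl rfl]
  ring

/-- every deterministic 1-bit strategy either hits a forbidden entry
with nonzero probability, or has expected payoff exactly 0; hence every
deterministic strategy avoiding forbidden entries has expected payoff ≤ 0. -/
theorem dmh_deterministic_payoff (E : Fin 4 → Fin 2) (D : Fin 2 → Fin 4) :
    ((∃ p ∈ dmhForbidden, detStrategy E D p.1 p.2 ≠ 0) ∨
      dmhPayoff (detStrategy E D) = 0) ∧
    ((∀ p ∈ dmhForbidden, detStrategy E D p.1 p.2 = 0) →
      dmhPayoff (detStrategy E D) ≤ 0) := by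
  constructor
  · by_cases h : ∀ p ∈ dmhForbidden, detStrategy E D p.1 p.2 = 0
    · exact Or.inr (dmh_key E D h)
    · push_neg at h
      exact Or.inl h
  · intro h
    exact (dmh_key E D h).le
end

section
/- The two-qubit maximally entangled state |φ⁺⟩ = (|00⟩+|11⟩)/√2 does not satisfy Hardy's nonlocality: there are no projective measurements {E_x^a} for Alice and {F_y^b} for Bob on ℂ² such that the correlation h(a,b|x,y) = ⟨φ⁺| E_x^a ⊗ F_y^b |φ⁺⟩ satisfies h(0,0|0,0) > 0, h(0,1|0,1) = 0, h(1,0|1,0) = 0, h(0,0|1,1) = 0. -/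
open Kronecker

/-- The maximally entangled two-qubit state |φ⁺⟩ = (|00⟩+|11⟩)/√2, as a vector in ℂ²⊗ℂ². -/
noncomputable def phiPlus : Fin 2 × Fin 2 → ℂ :=
  fun p => if p.1 = p.2 then (1 / Real.sqrt 2 : ℝ) else 0

/-- The correlation ⟨φ⁺| E ⊗ F |φ⁺⟩. -/
noncomputable def phiPlusCorr (E F : Matrix (Fin 2) (Fin 2) ℂ) : ℂ :=
  dotProduct (star phiPlus) ((E ⊗ₖ F).mulVec phiPlus)

/-- A pair of rank-one orthogonal projections on ℂ² summing to the identity. -/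
def IsProjectivePair (P : Fin 2 → Matrix (Fin 2) (Fin 2) ℂ) : Prop :=
  (∀ a, (P a).IsHermitian) ∧ (∀ a, P a * P a = P a) ∧ (∀ a, (P a).rank = 1) ∧
    P 0 + P 1 = 1

/-!
Since `⟨φ⁺| E ⊗ F |φ⁺⟩ = tr (E Fᵀ) / 2`, Hardy's three zero conditions say that certain
products of projections have vanishing trace. For orthogonal projections `tr (P Q) = 0` forces
`P Q = 0`, and two orthogonal rank-one projections on `ℂ²` are complementary. Hence
`F₁⁰ᵀ = E₁¹`, so `F₁¹ᵀ = E₁⁰`; then `E₁⁰ = E₀¹`, i.e. `E₁¹ = E₀⁰`, and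
`h(0,0|0,0) = h(1,1|0,0) = 0`.
-/

open Matrix

theorem Matrix.trace_eq_rank_of_isIdempotentElem {K n : Type*} [Field K] [Fintype n]
    [DecidableEq n] {A : Matrix n n K} (hA : IsIdempotentElem A) : A.trace = A.rank := by
  have hf : IsIdempotentElem (toLin' A) := hA.map toLinAlgEquiv'
  rw [← trace_toLin'_eq, (LinearMap.IsIdempotentElem.isProj_range _ hf).trace]
  rfl

namespace IsStarProjection

open ComplexOrder

variable {𝕜 n : Type*} [RCLike 𝕜] [Fintype n] {P Q : Matrix n n 𝕜}

theorem eq_zero_of_trace_eq_zero (hP : IsStarProjection P) (h : P.trace = 0) : P = 0 := by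
  rw [← trace_conjTranspose_mul_self_eq_zero_iff, ← star_eq_conjTranspose,
    hP.isSelfAdjoint.star_eq, hP.isIdempotentElem.eq, h]

theorem mul_eq_zero_of_trace_mul_eq_zero (hP : IsStarProjection P) (hQ : IsStarProjection Q)
    (h : (P * Q).trace = 0) : P * Q = 0 := by
  have hstar : star (Q * P) = P * Q := by
    rw [star_mul, hP.isSelfAdjoint.star_eq, hQ.isSelfAdjoint.star_eq]
  have hsandwich : P * Q * (Q * P) = P * Q * P := by
    rw [← mul_assoc, mul_assoc P Q Q, hQ.isIdempotentElem.eq]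
  have hQP : Q * P = 0 := by
    rw [← trace_conjTranspose_mul_self_eq_zero_iff, ← star_eq_conjTranspose, hstar, hsandwich,
      trace_mul_cycle, hP.isIdempotentElem.eq, h]
  rw [← hstar, hQP, star_zero]

theorem add_eq_one_of_mul_eq_zero [DecidableEq n] (hP : IsStarProjection P)
    (hQ : IsStarProjection Q) (hPQ : P * Q = 0) (hrank : P.rank + Q.rank = Fintype.card n) :
    P + Q = 1 := by
  have hS : IsStarProjection (1 - (P + Q)) := (hP.add hQ hPQ).one_sub
  refine (sub_eq_zero.mp (hS.eq_zero_of_trace_eq_zero ?_)).symm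
  rw [trace_sub, trace_add, trace_one, trace_eq_rank_of_isIdempotentElem hP.isIdempotentElem,
    trace_eq_rank_of_isIdempotentElem hQ.isIdempotentElem, ← hrank]
  push_cast
  ring

end IsStarProjection

namespace IsProjectivePair

variable {P Q : Fin 2 → Matrix (Fin 2) (Fin 2) ℂ}

theorem isStarProjection (hP : IsProjectivePair P) (a : Fin 2) : IsStarProjection (P a) :=
  ⟨hP.2.1 a, hP.1 a⟩

theorem one_sub_zero (hP : IsProjectivePair P) : 1 - P 0 = P 1 := by
  rw [← hP.2.2.2, add_sub_cancel_left]

theorem one_sub_one (hP : IsProjectivePair P) : 1 - P 1 = P 0 := by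
  rw [← hP.2.2.2, add_sub_cancel_right]

theorem transpose (hP : IsProjectivePair P) : IsProjectivePair fun a => (P a)ᵀ :=
  ⟨fun a => (hP.1 a).transpose, fun a => by rw [← transpose_mul, hP.2.1 a],
    fun a => by rw [rank_transpose, hP.2.2.1 a], by rw [← transpose_add, hP.2.2.2, transpose_one]⟩

theorem eq_one_sub_of_trace_mul_eq_zero (hP : IsProjectivePair P) (hQ : IsProjectivePair Q)
    {a b : Fin 2} (h : (P a * Q b).trace = 0) : Q b = 1 - P a := by
  refine eq_sub_of_add_eq' ((hP.isStarProjection a).add_eq_one_of_mul_eq_zero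
    (hQ.isStarProjection b) ?_ ?_)
  · exact (hP.isStarProjection a).mul_eq_zero_of_trace_mul_eq_zero (hQ.isStarProjection b) h
  · rw [hP.2.2.1 a, hQ.2.2.1 b, Fintype.card_fin]

end IsProjectivePair

theorem phiPlusCorr_eq (E F : Matrix (Fin 2) (Fin 2) ℂ) :
    phiPlusCorr E F = (E * Fᵀ).trace / 2 := by
  have hsqrt : ((Real.sqrt 2 : ℝ) : ℂ) ^ 2 = 2 := by
    exact_mod_cast Real.sq_sqrt zero_le_two
  simp only [phiPlusCorr, dotProduct, Pi.star_apply, phiPlus, one_div, Complex.ofReal_inv,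
    RCLike.star_def, mulVec, kroneckerMap_apply, mul_ite, mul_zero, Fintype.sum_prod_type,
    Finset.sum_ite_eq, Finset.mem_univ, ↓reduceIte, Fin.sum_univ_two, Fin.isValue, map_inv₀,
    Complex.conj_ofReal, zero_ne_one, map_zero, zero_mul, add_zero, one_ne_zero, zero_add, trace,
    diag_apply, mul_apply, transpose_apply]
  field_simp
  rw [hsqrt]
  ring

theorem phiPlusCorr_eq_zero_iff (E F : Matrix (Fin 2) (Fin 2) ℂ) :
    phiPlusCorr E F = 0 ↔ (E * Fᵀ).trace = 0 := by
  rw [phiPlusCorr_eq, div_eq_zero_iff, or_iff_left two_ne_zero]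

/-- the two-qubit maximally entangled state does not exhibit Hardy's
nonlocality: no local projective measurements yield a correlation satisfying
Hardy's conditions. -/
theorem phiPlus_no_hardy :
    ¬ ∃ (E F : Fin 2 → Fin 2 → Matrix (Fin 2) (Fin 2) ℂ),
      (∀ x, IsProjectivePair (E x)) ∧ (∀ y, IsProjectivePair (F y)) ∧
      0 < (phiPlusCorr (E 0 0) (F 0 0)).re ∧
      phiPlusCorr (E 0 0) (F 1 1) = 0 ∧
      phiPlusCorr (E 1 1) (F 0 0) = 0 ∧
      phiPlusCorr (E 1 0) (F 1 0) = 0 := by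
  rintro ⟨E, F, hE, hF, hpos, h01, h10, h11⟩
  simp only [phiPlusCorr_eq_zero_iff] at h01 h10 h11
  have hFt : ∀ y, IsProjectivePair fun b => (F y b)ᵀ := fun y => (hF y).transpose
  have hF10 : (F 1 0)ᵀ = E 1 1 := by
    rw [(hE 1).eq_one_sub_of_trace_mul_eq_zero (hFt 1) h11, (hE 1).one_sub_zero]
  have hF11 : (F 1 1)ᵀ = E 1 0 := by
    rw [← (hFt 1).one_sub_zero, hF10, (hE 1).one_sub_one]
  have hE10 : E 1 0 = E 0 1 := by
    rw [hF11] at h01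
    rw [(hE 0).eq_one_sub_of_trace_mul_eq_zero (hE 1) h01, (hE 0).one_sub_zero]
  have hE11 : E 1 1 = E 0 0 := by
    rw [← (hE 1).one_sub_zero, hE10, (hE 0).one_sub_one]
  rw [hE11, ← phiPlusCorr_eq_zero_iff] at h10
  simp [h10] at hpos
end

section
/- There is no strategy using the two-qubit maximally entangled state and 1 classical bit that wins the DMH game: for any POVMs {E_c^{(m)}}_{c∈{0,1}} (m = 1,...,4) on ℂ² and any POVMs {N_z^{(c)}}_{z=1}^4 (c = 0,1) on ℂ², if the strategy s(m,z) = (1/2) ∑_{c} Tr[E_c^{(m)} (N_z^{(c)})ᵀ] vanishes on all DMH-forbidden entries, then s(3,1) ≤ s(1,1), hence the expected payoff (1/4)(s(3,1) − s(1,1)) is ≤ 0. -/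
open scoped ComplexOrder
/-!
For positive semidefinite `P` and `Q`, `Tr (P Q) ≥ 0` with equality only if `P Q = 0`. Hence,
with `B c z = (N c z)ᵀ`, a vanishing forbidden entry `(m, z)` forces `E m c * B c z = 0` for
both `c`. These orthogonality relations propagate through the POVM identities. Fix `c' ≠ c`
(indices from 0): the entries `(1,0)` and `(3,0)` make `E 1 c'` and `E 3 c'` fix `B c 0`; then
`(1,0)`, `(3,1)` and `(1,2)` make `B c' z` kill `B c 0` for `z ≠ 3`, so `B c' 3` fixes `B c 0`,
and `(0,3)` gives `E 0 c' * B c 0 = 0`. Thus `E 0 c` fixes `B c 0` and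
`s 0 0 = ½ ∑ c, Tr (B c 0)`, which dominates `s 2 0 = ½ ∑ c, Tr (E 2 c * B c 0)` because `E 2 c`
is one effect of a POVM.
-/

section

variable {R : Type*}

theorem mul_eq_self_of_sum_eq_one [Semiring R] {ι : Type*} [Fintype ι] {P : ι → R}
    (hP : ∑ j, P j = 1) {x : R} (i : ι) (h : ∀ j ≠ i, P j * x = 0) : P i * x = x :=
  calc P i * x = ∑ j, P j * x :=
        (Finset.sum_eq_single i (fun j _ hj => h j hj) (by simp)).symm
    _ = x := by rw [← Finset.sum_mul, hP, one_mul]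

theorem mul_eq_zero_of_mul_eq_self_of_mul_eq_zero [SemigroupWithZero R] {a x y : R}
    (hx : a * x = x) (hy : y * a = 0) : y * x = 0 := by
  rw [← hx, ← mul_assoc, hy, zero_mul]

end

section

variable {R : Type*} [Ring R] [StarRing R] {A : Fin 4 → Fin 2 → R} {B : Fin 2 → Fin 4 → R}

theorem dmh_mul_eq_zero_of_ne (hA : ∀ m, ∑ c, A m c = 1) (hAsa : ∀ m c, IsSelfAdjoint (A m c))
    (hB : ∀ c, ∑ z, B c z = 1) (hBsa : ∀ c z, IsSelfAdjoint (B c z))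
    (horth : ∀ p ∈ dmhForbidden, ∀ c, A p.1 c * B c p.2 = 0) {c c' : Fin 2} (hc : c' ≠ c) :
    A 0 c' * B c 0 = 0 := by
  have hother : ∀ j ≠ c', j = c := by revert c c'; decide
  have swap (m z : Fin 4) (hmz : (m, z) ∈ dmhForbidden) (d : Fin 2) : B d z * A m d = 0 :=
    ((hAsa m d).commute_of_mul_eq_zero (hBsa d z) (horth (m, z) hmz d)).eq.symm.trans
      (horth (m, z) hmz d)
  have hA1 : A 1 c' * B c 0 = B c 0 := mul_eq_self_of_sum_eq_one (hA 1) c' fun j hj => by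
    rw [hother j hj]; exact horth (1, 0) (by decide) c
  have hA3 : A 3 c' * B c 0 = B c 0 := mul_eq_self_of_sum_eq_one (hA 3) c' fun j hj => by
    rw [hother j hj]; exact horth (3, 0) (by decide) c
  have hB3 : B c' 3 * B c 0 = B c 0 := mul_eq_self_of_sum_eq_one (hB c') 3 fun z hz => by
    fin_cases z
    · exact mul_eq_zero_of_mul_eq_self_of_mul_eq_zero hA1 (swap 1 0 (by decide) c')
    · exact mul_eq_zero_of_mul_eq_self_of_mul_eq_zero hA3 (swap 3 1 (by decide) c')
    · exact mul_eq_zero_of_mul_eq_self_of_mul_eq_zero hA1 (swap 1 2 (by decide) c')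
    · exact absurd rfl hz
  exact mul_eq_zero_of_mul_eq_self_of_mul_eq_zero hB3 (horth (0, 3) (by decide) c')

end

namespace Matrix

open scoped MatrixOrder

variable {𝕜 n : Type*} [RCLike 𝕜] [Fintype n]

theorem trace_star_mul_self_mul_star_mul_self (a b : Matrix n n 𝕜) :
    (star a * a * (star b * b)).trace = (star (b * star a) * (b * star a)).trace := by
  rw [star_mul, star_star, mul_assoc, trace_mul_comm, mul_assoc, mul_assoc, mul_assoc]

variable {P Q : Matrix n n 𝕜}

theorem PosSemidef.trace_mul_nonneg (hP : P.PosSemidef) (hQ : Q.PosSemidef) :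
    0 ≤ (P * Q).trace := by
  classical
  obtain ⟨a, rfl⟩ := CStarAlgebra.nonneg_iff_eq_star_mul_self.mp hP.nonneg
  obtain ⟨b, rfl⟩ := CStarAlgebra.nonneg_iff_eq_star_mul_self.mp hQ.nonneg
  rw [trace_star_mul_self_mul_star_mul_self]
  exact (posSemidef_conjTranspose_mul_self _).trace_nonneg

theorem PosSemidef.trace_mul_eq_zero_iff (hP : P.PosSemidef) (hQ : Q.PosSemidef) :
    (P * Q).trace = 0 ↔ P * Q = 0 := by
  classical
  refine ⟨fun h => ?_, fun h => by rw [h, trace_zero]⟩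
  obtain ⟨a, rfl⟩ := CStarAlgebra.nonneg_iff_eq_star_mul_self.mp hP.nonneg
  obtain ⟨b, rfl⟩ := CStarAlgebra.nonneg_iff_eq_star_mul_self.mp hQ.nonneg
  rw [trace_star_mul_self_mul_star_mul_self] at h
  have hba : b * star a = 0 := trace_conjTranspose_mul_self_eq_zero_iff.mp h
  have hab : a * star b = 0 := by simpa using congr_arg star hba
  rw [mul_assoc, ← mul_assoc a, hab, zero_mul, mul_zero]

theorem trace_mul_le_trace_of_sum_eq_one [DecidableEq n] {ι : Type*} [Fintype ι]
    {P : ι → Matrix n n 𝕜} (hP : ∀ j, (P j).PosSemidef) (hsum : ∑ j, P j = 1)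
    (hQ : Q.PosSemidef) (i : ι) :
    (P i * Q).trace ≤ Q.trace :=
  calc (P i * Q).trace ≤ ∑ j, (P j * Q).trace :=
        Finset.single_le_sum (fun j _ => (hP j).trace_mul_nonneg hQ) (Finset.mem_univ i)
    _ = Q.trace := by rw [← trace_sum, ← Finset.sum_mul, hsum, Matrix.one_mul]

theorem mul_eq_zero_of_re_sum_trace_mul_eq_zero {ι : Type*} [Fintype ι]
    {P Q : ι → Matrix n n 𝕜} (hP : ∀ i, (P i).PosSemidef) (hQ : ∀ i, (Q i).PosSemidef)
    (h : RCLike.re (∑ i, (P i * Q i).trace) = 0) (i : ι) : P i * Q i = 0 := by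
  have hnonneg (j : ι) : 0 ≤ (P j * Q j).trace := (hP j).trace_mul_nonneg (hQ j)
  have hsum_nonneg : 0 ≤ ∑ j, (P j * Q j).trace := Finset.sum_nonneg fun j _ => hnonneg j
  have hsum : ∑ j, (P j * Q j).trace = 0 :=
    RCLike.ext (by simpa using h) (by simpa using (RCLike.nonneg_iff.mp hsum_nonneg).2)
  rw [← (hP i).trace_mul_eq_zero_iff (hQ i)]
  exact (Finset.sum_eq_zero_iff_of_nonneg fun j _ => hnonneg j).mp hsum i (Finset.mem_univ i)

end Matrix

/-- no strategy using the two-qubit maximally entangled state and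
1 classical bit wins the DMH game. Alice's POVMs E^(m) = {E^(m)_0, E^(m)_1} and
Bob's POVMs N^(c) = {N^(c)_1,…,N^(c)_4} induce the strategy
s(m,z) = (1/2)∑_c Tr[E^(m)_c (N^(c)_z)ᵀ]; if it vanishes on all forbidden entries
then s(3,1) ≤ s(1,1), so the expected payoff (1/4)(s(3,1) − s(1,1)) is ≤ 0. -/
theorem phiPlus_cannot_win_dmh
    (E : Fin 4 → Fin 2 → Matrix (Fin 2) (Fin 2) ℂ)
    (N : Fin 2 → Fin 4 → Matrix (Fin 2) (Fin 2) ℂ)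
    (hEpos : ∀ m c, (E m c).PosSemidef)
    (hEsum : ∀ m, ∑ c, E m c = 1)
    (hNpos : ∀ c z, (N c z).PosSemidef)
    (hNsum : ∀ c, ∑ z, N c z = 1)
    (s : Fin 4 → Fin 4 → ℝ)
    (hs : ∀ m z, s m z = ((1/2 : ℂ) * ∑ c, (E m c * (N c z).transpose).trace).re)
    (hforb : ∀ p ∈ dmhForbidden, s p.1 p.2 = 0) :
    s 2 0 ≤ s 0 0 ∧ (1/4 : ℝ) * (s 2 0 - s 0 0) ≤ 0 := by
  have hNTpos (c z) : (N c z).transpose.PosSemidef := (hNpos c z).transpose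
  have hNTsum (c) : ∑ z, (N c z).transpose = 1 := by
    rw [← Matrix.transpose_sum, hNsum, Matrix.transpose_one]
  have hs' (m z) : s m z = (∑ c, (E m c * (N c z).transpose).trace).re / 2 := by
    rw [hs]; norm_num [Complex.mul_re]; ring
  have horth : ∀ p ∈ dmhForbidden, ∀ c, E p.1 c * (N c p.2).transpose = 0 := fun p hp =>
    Matrix.mul_eq_zero_of_re_sum_trace_mul_eq_zero (hEpos p.1) (fun c => hNTpos c p.2)
      (by simpa [hs'] using hforb p hp)
  have hfirst (c) : E 0 c * (N c 0).transpose = (N c 0).transpose :=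
    mul_eq_self_of_sum_eq_one (hEsum 0) c fun _ hc =>
      dmh_mul_eq_zero_of_ne hEsum (fun m c => (hEpos m c).isHermitian.isSelfAdjoint) hNTsum
        (fun c z => (hNTpos c z).isHermitian.isSelfAdjoint) horth hc
  have hle :
      ∑ c, (E 2 c * (N c 0).transpose).trace ≤ ∑ c, (E 0 c * (N c 0).transpose).trace := by
    simp only [hfirst]
    exact Finset.sum_le_sum fun c _ =>
      Matrix.trace_mul_le_trace_of_sum_eq_one (hEpos 2) (hEsum 2) (hNTpos c 0) c
  have hmain : s 2 0 ≤ s 0 0 := by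
    rw [hs', hs']
    exact div_le_div_of_nonneg_right (Complex.le_def.mp hle).1 zero_le_two
  exact ⟨hmain, by linarith⟩
end
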